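/- arXiv:2508.06766 — 4 statements merged into one kernel-verified Lean document; each statement's English description precedes it below -/
import Mathlib

section
/- For every integer n ≥ 0 and every k ∈ ℤ, the n-th coefficient of the formal power series ∑_{m=0}^{n} (-L(X))^m / (m! · (αm + a)^{k}) in ℂ⟦X⟧, where L(X) = ∑_{j≥1} (-1)^{j-1} X^j / j is the formal logarithm log(1+X), multiplied by n!, equals (-1)^n ∑_{m=0}^{n} [n m] · (αm + a)^{-k}. (Since L(X)^m has X-adic order m, the terms with m > n contribute nothing to the coefficient of X^n, so this finite sum computes the coefficient of X^n in the generating function Φ_f(-ln(1+t), k, α, a) of the two-parameter Hurwitz-Lerch type poly-Cauchy numbers of the second kind.) -/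
/-!
Write `ℓ = -log(1+X)`. Since `(1+X) ℓ' = -1`, the powers of `ℓ` satisfy
`(1+X) (ℓ^(m+1))' = -(m+1) ℓ^m`. Comparing coefficients of `X^n`, the numbers
`(-1)^n n! [X^n] ℓ^m / m!` obey the recurrence `[n+1, m+1] = [n, m] + n [n, m+1]` of the
unsigned Stirling numbers of the first kind and have the same initial values. The
factor `m!` then cancels against the weight `1 / (m! (αm+a)^k)`.
-/

open PowerSeries Finset

/-- Unsigned Stirling numbers of the first kind. -/
def stirling1 : ℕ → ℕ → ℕ
  | 0, 0 => 1
  | 0, _ + 1 => 0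
  | _ + 1, 0 => 0
  | n + 1, m + 1 => stirling1 n m + n * stirling1 n (m + 1)

/-- Stirling numbers of the second kind. -/
def stirling2 : ℕ → ℕ → ℕ
  | 0, 0 => 1
  | 0, _ + 1 => 0
  | _ + 1, 0 => 0
  | n + 1, m + 1 => stirling2 n m + (m + 1) * stirling2 n (m + 1)

/-- Two-parameter Hurwitz-Lerch type poly-Bernoulli numbers
    `B_n^{(k)}(α,a) = (-1)^n ∑_{m=0}^n (-1)^m m! {n m} (αm+a)^{-k}`. -/
noncomputable def polyBernoulli (k : ℤ) (α a : ℂ) (n : ℕ) : ℂ :=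
  (-1 : ℂ) ^ n * ∑ m ∈ Finset.range (n + 1),
    (-1 : ℂ) ^ m * (m.factorial : ℂ) * (stirling2 n m : ℂ) * (α * m + a) ^ (-k)

/-- Two-parameter Hurwitz-Lerch type poly-Cauchy numbers of the first kind
    `c_n^{(k)}(α,a) = (-1)^n ∑_{m=0}^n (-1)^m [n m] (αm+a)^{-k}`. -/
noncomputable def polyCauchy1 (k : ℤ) (α a : ℂ) (n : ℕ) : ℂ :=
  (-1 : ℂ) ^ n * ∑ m ∈ Finset.range (n + 1),
    (-1 : ℂ) ^ m * (stirling1 n m : ℂ) * (α * m + a) ^ (-k)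

/-- Two-parameter Hurwitz-Lerch type poly-Cauchy numbers of the second kind
    `ĉ_n^{(k)}(α,a) = (-1)^n ∑_{m=0}^n [n m] (αm+a)^{-k}`. -/
noncomputable def polyCauchy2 (k : ℤ) (α a : ℂ) (n : ℕ) : ℂ :=
  (-1 : ℂ) ^ n * ∑ m ∈ Finset.range (n + 1),
    (stirling1 n m : ℂ) * (α * m + a) ^ (-k)

/-- The formal power series `log(1+X) = ∑_{j≥1} (-1)^{j-1} X^j / j` in `ℂ⟦X⟧`. -/
noncomputable def formalLog : PowerSeries ℂ :=
  PowerSeries.mk fun j => if j = 0 then 0 else (-1 : ℂ) ^ (j - 1) / j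

theorem PowerSeries.coeff_one_add_X_mul_derivative {R : Type*} [CommSemiring R] (f : R⟦X⟧)
    (n : ℕ) :
    coeff n ((1 + X) * d⁄dX R f) = coeff (n + 1) f * (n + 1) + coeff n f * n := by
  rw [add_mul, one_mul, map_add, coeff_derivative]
  cases n with
  | zero => simp
  | succ n => rw [coeff_succ_X_mul, coeff_derivative]; push_cast; ring

theorem constantCoeff_formalLog : constantCoeff formalLog = 0 := by
  simp [formalLog, ← coeff_zero_eq_constantCoeff_apply]

theorem coeff_succ_formalLog_mul (n : ℕ) : coeff (n + 1) formalLog * (n + 1) = (-1) ^ n := by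
  simp only [formalLog, coeff_mk, Nat.add_sub_cancel, if_neg n.succ_ne_zero, Nat.cast_succ]
  exact div_mul_cancel₀ _ (Nat.cast_add_one_ne_zero n)

theorem one_add_X_mul_derivative_neg_formalLog : (1 + X) * d⁄dX ℂ (-formalLog) = -1 := by
  ext n
  rw [coeff_one_add_X_mul_derivative]
  simp only [map_neg, neg_mul, coeff_succ_formalLog_mul]
  cases n with
  | zero => simp
  | succ n => simp [coeff_succ_formalLog_mul, pow_succ]

theorem one_add_X_mul_derivative_neg_formalLog_pow (m : ℕ) :
    (1 + X) * d⁄dX ℂ ((-formalLog) ^ (m + 1)) = -((m + 1 : ℂ) • (-formalLog) ^ m) := by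
  rw [derivative_pow, Nat.add_sub_cancel, mul_left_comm, one_add_X_mul_derivative_neg_formalLog]
  simp only [smul_eq_C_mul, map_add, map_one, map_natCast, Nat.cast_succ]
  ring

theorem factorial_mul_coeff_neg_formalLog_pow (n m : ℕ) :
    (n.factorial : ℂ) * coeff n ((-formalLog) ^ m) = (-1) ^ n * m.factorial * stirling1 n m := by
  induction n generalizing m with
  | zero => cases m <;> simp [stirling1, constantCoeff_formalLog]
  | succ n ih =>
    cases m with
    | zero => simp [stirling1, coeff_one]
    | succ m =>
      have hrec := congrArg (coeff n) (one_add_X_mul_derivative_neg_formalLog_pow m)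
      rw [coeff_one_add_X_mul_derivative, map_neg, coeff_smul, smul_eq_mul] at hrec
      have ih' := ih (m + 1)
      simp only [Nat.factorial_succ, stirling1, pow_succ (-1 : ℂ)] at ih' ⊢
      push_cast at ih' ⊢
      linear_combination (n.factorial : ℂ) * hrec - ((m : ℂ) + 1) * ih m - (n : ℂ) * ih'

theorem stmt2_general (α a : ℂ) (n : ℕ) (k : ℤ) :
    (n.factorial : ℂ) * PowerSeries.coeff n
      (∑ m ∈ Finset.range (n + 1),
        PowerSeries.C (((m.factorial : ℂ) * (α * m + a) ^ k)⁻¹) * (-formalLog) ^ m) =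
    (-1 : ℂ) ^ n * ∑ m ∈ Finset.range (n + 1),
      (stirling1 n m : ℂ) * (α * m + a) ^ (-k) := by
  rw [map_sum, mul_sum, mul_sum]
  refine sum_congr rfl fun m _ => ?_
  have hm : (m.factorial : ℂ) ≠ 0 := Nat.cast_ne_zero.mpr m.factorial_ne_zero
  rw [coeff_C_mul, mul_left_comm, factorial_mul_coeff_neg_formalLog_pow, zpow_neg, mul_inv]
  field_simp

theorem stmt2 (α a : ℂ) (hα : α ≠ 0) (ha : ∀ m : ℕ, α * m + a ≠ 0) (n : ℕ) (k : ℤ) :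
    (n.factorial : ℂ) * PowerSeries.coeff n
      (∑ m ∈ Finset.range (n + 1),
        PowerSeries.C (((m.factorial : ℂ) * (α * m + a) ^ k)⁻¹) * (-formalLog) ^ m) =
    (-1 : ℂ) ^ n * ∑ m ∈ Finset.range (n + 1),
      (stirling1 n m : ℂ) * (α * m + a) ^ (-k) :=
  stmt2_general α a n k
end

section
/- For every integer n ≥ 0 and every k ∈ ℤ, the two-parameter Hurwitz-Lerch type poly-Cauchy numbers of the second kind satisfy the orthogonality relation ∑_{m=0}^{n} {n m} · ĉ_m^{(k)}(α, a) = (-1)^n · (αn + a)^{-k}. -/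
open PowerSeries Finset

lemma stirling1_eq_zero_of_lt : ∀ n m : ℕ, n < m → stirling1 n m = 0 := by
  intro n
  induction n with
  | zero => intro m hm; match m, hm with | m + 1, _ => rfl
  | succ n ih =>
    intro m hm
    match m, hm with
    | m + 1, hm =>
      have h1 : n < m := Nat.lt_of_succ_lt_succ hm
      have h2 : n < m + 1 := Nat.lt_succ_of_lt h1
      simp [stirling1, ih m h1, ih (m + 1) h2]

lemma stirling2_eq_zero_of_lt : ∀ n m : ℕ, n < m → stirling2 n m = 0 := by
  intro n
  induction n with
  | zero => intro m hm; match m, hm with | m + 1, _ => rfl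
  | succ n ih =>
    intro m hm
    match m, hm with
    | m + 1, hm =>
      have h1 : n < m := Nat.lt_of_succ_lt_succ hm
      have h2 : n < m + 1 := Nat.lt_succ_of_lt h1
      simp [stirling2, ih m h1, ih (m + 1) h2]

lemma stirling_orth : ∀ n l : ℕ,
    ∑ m ∈ Finset.range (n + 1), (-1 : ℂ) ^ m * (stirling2 n m : ℂ) * (stirling1 m l : ℂ) =
      if n = l then (-1 : ℂ) ^ n else 0 := by
  intro n
  induction n with
  | zero =>
    intro l
    cases l with
    | zero => simp [stirling1, stirling2]
    | succ l => simp [stirling1, stirling2]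
  | succ n ih =>
    intro l
    rw [Finset.sum_range_succ']
    have h0 : (stirling2 (n + 1) 0 : ℂ) = 0 := by simp [stirling2]
    rw [h0]
    simp only [pow_zero, one_mul, mul_zero, zero_mul, add_zero]
    cases l with
    | zero =>
      have : ∀ j ∈ Finset.range (n + 1),
          (-1 : ℂ) ^ (j + 1) * (stirling2 (n + 1) (j + 1) : ℂ) * (stirling1 (j + 1) 0 : ℂ) = 0 := by
        intro j _
        have : stirling1 (j + 1) 0 = 0 := rfl
        simp [this]
      rw [Finset.sum_congr rfl this]
      simp
    | succ l =>
      -- rewrite each term using the recurrences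
      have hterm : ∀ j ∈ Finset.range (n + 1),
          (-1 : ℂ) ^ (j + 1) * (stirling2 (n + 1) (j + 1) : ℂ) * (stirling1 (j + 1) (l + 1) : ℂ)
            = -((-1 : ℂ) ^ j * (stirling2 n j : ℂ) * (stirling1 j l : ℂ))
              - ((-1 : ℂ) ^ j * (j : ℂ) * (stirling2 n j : ℂ) * (stirling1 j (l + 1) : ℂ))
              + (-1 : ℂ) ^ (j + 1) * ((j : ℂ) + 1) * (stirling2 n (j + 1) : ℂ)
                * (stirling1 (j + 1) (l + 1) : ℂ) := by
        intro j _
        have h2 : (stirling2 (n + 1) (j + 1) : ℂ)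
            = (stirling2 n j : ℂ) + ((j : ℂ) + 1) * (stirling2 n (j + 1) : ℂ) := by
          show ((stirling2 n j + (j + 1) * stirling2 n (j + 1) : ℕ) : ℂ) = _
          push_cast; ring
        have h1 : (stirling1 (j + 1) (l + 1) : ℂ)
            = (stirling1 j l : ℂ) + (j : ℂ) * (stirling1 j (l + 1) : ℂ) := by
          show ((stirling1 j l + j * stirling1 j (l + 1) : ℕ) : ℂ) = _
          push_cast; ring
        rw [h2, h1]
        ring
      rw [Finset.sum_congr rfl hterm]
      rw [Finset.sum_add_distrib, Finset.sum_sub_distrib]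
      set g : ℕ → ℂ := fun m => (-1 : ℂ) ^ m * (m : ℂ) * (stirling2 n m : ℂ)
        * (stirling1 m (l + 1) : ℂ) with hg
      have hshift : ∑ j ∈ Finset.range (n + 1),
          (-1 : ℂ) ^ (j + 1) * ((j : ℂ) + 1) * (stirling2 n (j + 1) : ℂ)
            * (stirling1 (j + 1) (l + 1) : ℂ)
          = ∑ j ∈ Finset.range (n + 1),
            (-1 : ℂ) ^ j * (j : ℂ) * (stirling2 n j : ℂ) * (stirling1 j (l + 1) : ℂ) := by
        have h1 : ∑ j ∈ Finset.range (n + 1),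
            (-1 : ℂ) ^ (j + 1) * ((j : ℂ) + 1) * (stirling2 n (j + 1) : ℂ)
              * (stirling1 (j + 1) (l + 1) : ℂ) = ∑ j ∈ Finset.range (n + 1), g (j + 1) := by
          refine Finset.sum_congr rfl fun j _ => ?_
          simp only [hg]
          push_cast
          ring
        have h2 : ∑ m ∈ Finset.range (n + 2), g m
            = ∑ j ∈ Finset.range (n + 1), g (j + 1) + g 0 :=
          Finset.sum_range_succ' g (n + 1)
        have h3 : ∑ m ∈ Finset.range (n + 2), g m
            = ∑ j ∈ Finset.range (n + 1), g j + g (n + 1) :=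
          Finset.sum_range_succ g (n + 1)
        have hg0 : g 0 = 0 := by simp [hg]
        have hgn : g (n + 1) = 0 := by
          simp [hg, stirling2_eq_zero_of_lt n (n + 1) (Nat.lt_succ_self n)]
        rw [h1]
        have := h2.symm.trans h3
        rw [hg0, hgn, add_zero, add_zero] at this
        exact this
      rw [hshift]
      have : ∑ j ∈ Finset.range (n + 1),
          -((-1 : ℂ) ^ j * (stirling2 n j : ℂ) * (stirling1 j l : ℂ))
          = -(if n = l then (-1 : ℂ) ^ n else 0) := by
        rw [Finset.sum_neg_distrib, ih l]
      rw [this]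
      rw [sub_add_cancel]
      by_cases h : n = l
      · subst h; simp [pow_succ]
      · have h' : n + 1 ≠ l + 1 := fun hh => h (Nat.succ_injective hh)
        simp [h, h']

theorem stmt5 (α a : ℂ) (hα : α ≠ 0) (ha : ∀ m : ℕ, α * m + a ≠ 0) (n : ℕ) (k : ℤ) :
    ∑ m ∈ Finset.range (n + 1), (stirling2 n m : ℂ) * polyCauchy2 k α a m =
      (-1 : ℂ) ^ n * (α * n + a) ^ (-k) := by
  unfold polyCauchy2
  have hext : ∀ m ∈ Finset.range (n + 1),
      (stirling2 n m : ℂ) * ((-1 : ℂ) ^ m * ∑ l ∈ Finset.range (m + 1),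
        (stirling1 m l : ℂ) * (α * l + a) ^ (-k))
      = ∑ l ∈ Finset.range (n + 1),
          (-1 : ℂ) ^ m * (stirling2 n m : ℂ) * (stirling1 m l : ℂ) * (α * l + a) ^ (-k) := by
    intro m hm
    have hmn : m + 1 ≤ n + 1 := Finset.mem_range.mp hm
    rw [Finset.mul_sum, Finset.mul_sum]
    rw [← Finset.sum_subset (Finset.range_subset_range.mpr hmn)]
    · exact Finset.sum_congr rfl fun l _ => by ring
    · intro l _ hl
      rw [stirling1_eq_zero_of_lt m l (by
        have := Finset.mem_range.not.mp hl
        omega)]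
      simp
  rw [Finset.sum_congr rfl hext, Finset.sum_comm]
  have : ∀ l ∈ Finset.range (n + 1),
      ∑ m ∈ Finset.range (n + 1),
        (-1 : ℂ) ^ m * (stirling2 n m : ℂ) * (stirling1 m l : ℂ) * (α * l + a) ^ (-k)
      = (if n = l then (-1 : ℂ) ^ n else 0) * (α * l + a) ^ (-k) := by
    intro l _
    rw [← Finset.sum_mul, stirling_orth n l]
  rw [Finset.sum_congr rfl this]
  simp only [ite_mul, zero_mul]
  rw [Finset.sum_ite_eq]
  simp
end

section
/- For every integer n ≥ 0 and every k ∈ ℤ, the following duality identity holds between the two-parameter Hurwitz-Lerch type poly-Bernoulli numbers and the poly-Cauchy numbers of the first kind: B_n^{(k)}(α,a) = ∑_{l=0}^{n} ∑_{m=0}^{n} (-1)^{m+n} · m! · {n m} · {m l} · c_l^{(k)}(α,a). -/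
open PowerSeries Finset

lemma stirling1_eq_zero : ∀ l j : ℕ, l < j → stirling1 l j = 0
  | 0, 0, h => absurd h (lt_irrefl 0)
  | 0, j + 1, _ => rfl
  | l + 1, 0, h => absurd h (Nat.not_lt_zero _)
  | l + 1, j + 1, h => by
      have h' : l < j := Nat.lt_of_succ_lt_succ h
      simp [stirling1, stirling1_eq_zero l j h',
        stirling1_eq_zero l (j + 1) (h'.trans (Nat.lt_succ_self j))]

lemma stirling2_eq_zero : ∀ m l : ℕ, m < l → stirling2 m l = 0
  | 0, 0, h => absurd h (lt_irrefl 0)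
  | 0, l + 1, _ => rfl
  | m + 1, 0, h => absurd h (Nat.not_lt_zero _)
  | m + 1, l + 1, h => by
      have h' : m < l := Nat.lt_of_succ_lt_succ h
      simp [stirling2, stirling2_eq_zero m l h',
        stirling2_eq_zero m (l + 1) (h'.trans (Nat.lt_succ_self l))]

/-- orthogonality core -/
lemma orth : ∀ m j : ℕ,
    (∑ l ∈ Finset.range (m + 1), (-1 : ℂ) ^ l * (stirling2 m l : ℂ) * (stirling1 l j : ℂ))
      = if m = j then (-1 : ℂ) ^ m else 0 := by
  intro m
  induction m with
  | zero =>
      intro j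
      cases j <;> simp [stirling1, stirling2]
  | succ m ih =>
      intro j
      have key : (∑ l ∈ Finset.range (m + 2), (-1 : ℂ) ^ l * (stirling2 (m+1) l : ℂ) * (stirling1 l j : ℂ))
          = ∑ l ∈ Finset.range (m + 1),
              (-1 : ℂ) ^ (l+1) * (stirling2 (m+1) (l+1) : ℂ) * (stirling1 (l+1) j : ℂ) := by
        rw [Finset.sum_range_succ']
        simp [stirling2]
      rw [key]
      -- expand stirling2 recurrence
      have expand : ∀ l, ((stirling2 (m+1) (l+1) : ℂ)) = (stirling2 m l : ℂ) + (l+1) * (stirling2 m (l+1) : ℂ) := by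
        intro l; push_cast [stirling2]; ring
      -- split into A + B
      have split : (∑ l ∈ Finset.range (m + 1),
              (-1 : ℂ) ^ (l+1) * (stirling2 (m+1) (l+1) : ℂ) * (stirling1 (l+1) j : ℂ))
          = (∑ l ∈ Finset.range (m + 1),
              (-1 : ℂ) ^ (l+1) * (stirling2 m l : ℂ) * (stirling1 (l+1) j : ℂ))
            + ∑ l ∈ Finset.range (m + 1),
              (-1 : ℂ) ^ (l+1) * ((l:ℂ)+1) * (stirling2 m (l+1) : ℂ) * (stirling1 (l+1) j : ℂ) := by
        rw [← Finset.sum_add_distrib]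
        refine Finset.sum_congr rfl fun l _ => ?_
        rw [expand l]; ring
      rw [split]
      -- B equals sum of h l
      have hB : (∑ l ∈ Finset.range (m + 1),
              (-1 : ℂ) ^ (l+1) * ((l:ℂ)+1) * (stirling2 m (l+1) : ℂ) * (stirling1 (l+1) j : ℂ))
          = ∑ l ∈ Finset.range (m + 1),
              (-1 : ℂ) ^ l * (l:ℂ) * (stirling2 m l : ℂ) * (stirling1 l j : ℂ) := by
        have h1 : (∑ l ∈ Finset.range (m + 2),
              (-1 : ℂ) ^ l * (l:ℂ) * (stirling2 m l : ℂ) * (stirling1 l j : ℂ))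
            = ∑ l ∈ Finset.range (m + 1),
              (-1 : ℂ) ^ (l+1) * ((l:ℂ)+1) * (stirling2 m (l+1) : ℂ) * (stirling1 (l+1) j : ℂ) := by
          rw [Finset.sum_range_succ']
          push_cast
          simp
        rw [← h1, Finset.sum_range_succ, stirling2_eq_zero m (m+1) (Nat.lt_succ_self m)]
        simp
      rw [hB]
      cases j with
      | zero =>
          have hz : ∀ l, stirling1 (l+1) 0 = 0 := fun l => rfl
          have hB0 : (∑ l ∈ Finset.range (m+1), (-1:ℂ)^l * (l:ℂ) * (stirling2 m l : ℂ) * (stirling1 l 0 : ℂ)) = 0 := by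
            refine Finset.sum_eq_zero fun l _ => ?_
            cases l with
            | zero => simp
            | succ l' => simp [hz]
          rw [hB0]
          simp [hz]
      | succ j' =>
          -- expand stirling1 (l+1) (j'+1) in A
          have expandA : (∑ l ∈ Finset.range (m + 1),
                (-1 : ℂ) ^ (l+1) * (stirling2 m l : ℂ) * (stirling1 (l+1) (j'+1) : ℂ))
              = (- ∑ l ∈ Finset.range (m + 1),
                  (-1 : ℂ) ^ l * (stirling2 m l : ℂ) * (stirling1 l j' : ℂ))
                - ∑ l ∈ Finset.range (m + 1),
                  (-1 : ℂ) ^ l * (l:ℂ) * (stirling2 m l : ℂ) * (stirling1 l (j'+1) : ℂ) := by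
            rw [← Finset.sum_neg_distrib, ← Finset.sum_sub_distrib]
            refine Finset.sum_congr rfl fun l _ => ?_
            have : ((stirling1 (l+1) (j'+1) : ℂ)) = (stirling1 l j' : ℂ) + (l:ℂ) * (stirling1 l (j'+1) : ℂ) := by
              push_cast [stirling1]; ring
            rw [this]; ring
          rw [expandA, ih j']
          by_cases h : m = j'
          · subst h; simp [pow_succ]
          · simp [h, fun hh => h (Nat.succ_injective hh)]

theorem stmt6 (α a : ℂ) (hα : α ≠ 0) (ha : ∀ m : ℕ, α * m + a ≠ 0) (n : ℕ) (k : ℤ) :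
    polyBernoulli k α a n =
      ∑ l ∈ Finset.range (n + 1), ∑ m ∈ Finset.range (n + 1),
        (-1 : ℂ) ^ (m + n) * (m.factorial : ℂ) * (stirling2 n m : ℂ) *
          (stirling2 m l : ℂ) * polyCauchy1 k α a l := by
  have pc : ∀ l, l ≤ n → polyCauchy1 k α a l =
      (-1:ℂ)^l * ∑ j ∈ Finset.range (n+1), (-1:ℂ)^j * (stirling1 l j : ℂ) * (α*j+a)^(-k) := by
    intro l hl
    unfold polyCauchy1
    congr 1
    apply Finset.sum_subset (Finset.range_subset_range.mpr (by omega))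
    intro j _ hj
    have hlj : l < j := by
      have := Finset.mem_range.not.mp hj; omega
    rw [stirling1_eq_zero l j hlj]; simp
  symm
  calc
    (∑ l ∈ Finset.range (n + 1), ∑ m ∈ Finset.range (n + 1),
        (-1 : ℂ) ^ (m + n) * (m.factorial : ℂ) * (stirling2 n m : ℂ) *
          (stirling2 m l : ℂ) * polyCauchy1 k α a l)
      = ∑ m ∈ Finset.range (n + 1), ∑ l ∈ Finset.range (n+1), ∑ j ∈ Finset.range (n+1),
          ((-1:ℂ)^(m+n) * (m.factorial:ℂ) * (stirling2 n m : ℂ)) * ((-1:ℂ)^j * (α*(j:ℂ)+a)^(-k)) *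
          ((-1:ℂ)^l * (stirling2 m l : ℂ) * (stirling1 l j : ℂ)) := by
        rw [Finset.sum_comm]
        refine Finset.sum_congr rfl fun m _ => Finset.sum_congr rfl fun l hl => ?_
        rw [pc l (by have := Finset.mem_range.mp hl; omega), Finset.mul_sum, Finset.mul_sum]
        refine Finset.sum_congr rfl fun j _ => by ring
    _ = ∑ m ∈ Finset.range (n + 1), ∑ j ∈ Finset.range (n+1),
          ((-1:ℂ)^(m+n) * (m.factorial:ℂ) * (stirling2 n m : ℂ)) * ((-1:ℂ)^j * (α*(j:ℂ)+a)^(-k)) *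
          (if m = j then (-1:ℂ)^m else 0) := by
        refine Finset.sum_congr rfl fun m hm => ?_
        rw [Finset.sum_comm]
        refine Finset.sum_congr rfl fun j _ => ?_
        rw [← Finset.mul_sum]
        congr 1
        rw [← orth m j]
        refine (Finset.sum_subset (Finset.range_subset_range.mpr
          (by have := Finset.mem_range.mp hm; omega)) fun l _ hl => ?_).symm
        have hml : m < l := by have := Finset.mem_range.not.mp hl; omega
        rw [stirling2_eq_zero m l hml]; simp
    _ = polyBernoulli k α a n := by
        unfold polyBernoulli
        rw [Finset.mul_sum]
        refine Finset.sum_congr rfl fun m hm => ?_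
        rw [Finset.sum_eq_single m]
        · have h1 : (-1:ℂ)^m * (-1:ℂ)^m = 1 := by
            rw [← pow_add, ← two_mul, pow_mul]; norm_num
          have h2 : (-1:ℂ)^(m+n) = (-1:ℂ)^m * (-1:ℂ)^n := pow_add _ _ _
          rw [if_pos rfl, h2]
          linear_combination ((-1:ℂ)^n * (m.factorial:ℂ) * (stirling2 n m:ℂ) *
            (α*(m:ℂ)+a)^(-k) * (-1:ℂ)^m) * h1
        · intro j _ hj
          rw [if_neg (by omega)]; ring
        · intro h; exact absurd hm h
end

section
/- Let H ∈ ℂ⟦X⟧ be the exponential generating function H = ∑_{n≥0} B_n^{(k)}(α,a) X^n/n! of the two-parameter Hurwitz-Lerch type poly-Bernoulli numbers. Then, for every k ∈ ℤ, the formal derivative of H satisfies exp(X) · H′ = ∑_{n≥0} E_n^{(k)}(α,a) X^n/n!, where E_n^{(k)}(α,a) = ∑_{m=1}^{n+1} (-1)^{n+m-1} · m! · {n, m-1} · (αm + a)^{-k}. (Equivalently, H′ = e^{-X} · ∑_{n≥0} E_n^{(k)}(α,a) X^n/n!.) -/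
open PowerSeries Finset

/-
Coefficientwise, `exp X * H′` is the binomial transform `n ↦ ∑ⱼ C(n, j) B_{j+1}`. Expanding
`B_{j+1}` and exchanging the sums reduces the claim to the alternating binomial sum
`∑ⱼ (-1)ʲ C(n, j) {j+1, m+1} = (-1)ⁿ {n, m}`. Up to sign this says that the `n`-th forward
difference of `j ↦ {j+1, m+1}` at `0` is `{n, m}`, which follows by induction on `n` from
`Δ {j+1, m+1} = m {j+1, m+1} + {j+1, m}`, the Stirling recurrence in disguise.
-/

open fwdDiff

theorem stirling2_eq_stirlingSecond : ∀ n m, stirling2 n m = Nat.stirlingSecond n m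
  | 0, 0 | 0, _ + 1 | _ + 1, 0 => rfl
  | n + 1, m + 1 => by
    rw [stirling2, Nat.stirlingSecond_succ_succ, stirling2_eq_stirlingSecond n m,
      stirling2_eq_stirlingSecond n (m + 1), add_comm]

namespace Nat

variable {R : Type*} [CommRing R]

theorem fwdDiff_iter_stirlingSecond_succ (n m : ℕ) :
    Δ_[1] ^[n] (fun j : ℕ => (stirlingSecond (j + 1) (m + 1) : R)) 0 = stirlingSecond n m := by
  induction n generalizing m with
  | zero => cases m <;> simp [stirlingSecond_succ_succ]
  | succ n ih =>
    rw [Function.iterate_succ_apply]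
    cases m with
    | zero =>
      have hΔ : Δ_[1] (fun j : ℕ => (stirlingSecond (j + 1) 1 : R)) = fun _ => 0 := by
        simp [stirlingSecond_one_right]
      rw [hΔ, Function.iterate_fixed (fwdDiff_const (h := 1) (0 : R))]
      simp
    | succ m =>
      have hΔ : Δ_[1] (fun j : ℕ => (stirlingSecond (j + 1) (m + 1 + 1) : R)) =
          ((m + 1 : ℕ) : R) • (fun j : ℕ => (stirlingSecond (j + 1) (m + 1 + 1) : R)) +
            fun j : ℕ => (stirlingSecond (j + 1) (m + 1) : R) := by
        ext j
        simp only [fwdDiff, Pi.add_apply, Pi.smul_apply, smul_eq_mul,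
          stirlingSecond_succ_succ (j + 1) (m + 1)]
        push_cast
        ring
      rw [hΔ, fwdDiff_iter_add, fwdDiff_iter_const_smul, Pi.add_apply, Pi.smul_apply, ih, ih,
        stirlingSecond_succ_succ, smul_eq_mul]
      push_cast
      ring

theorem sum_range_neg_one_pow_mul_choose_mul_stirlingSecond_succ (n m : ℕ) :
    ∑ j ∈ Finset.range (n + 1), (-1 : R) ^ j * n.choose j * stirlingSecond (j + 1) (m + 1) =
      (-1) ^ n * stirlingSecond n m := by
  rw [← fwdDiff_iter_stirlingSecond_succ, fwdDiff_iter_eq_sum_shift, Finset.mul_sum]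
  refine Finset.sum_congr rfl fun j hj => ?_
  have hjn : j ≤ n := Finset.mem_range_succ_iff.mp hj
  have hsign : (-1 : R) ^ n * (-1) ^ (n - j) = (-1) ^ j := by
    rw [← pow_add, show n + (n - j) = j + 2 * (n - j) by omega, pow_add, pow_mul]
    simp
  rw [zsmul_eq_mul, smul_eq_mul, zero_add, mul_one]
  push_cast
  linear_combination (n.choose j * stirlingSecond (j + 1) (m + 1) : R) * hsign.symm

end Nat

namespace PowerSeries

variable {K : Type*} [Field K] [CharZero K]

theorem derivative_mk_div_factorial (f : ℕ → K) :
    d⁄dX K (mk fun n => f n / n.factorial) = mk fun n => f (n + 1) / n.factorial := by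
  ext n
  rw [coeff_derivative, coeff_mk, coeff_mk, Nat.factorial_succ]
  push_cast
  field_simp

theorem exp_mul_mk_div_factorial (f : ℕ → K) :
    exp K * mk (fun n => f n / n.factorial) =
      mk fun n => (∑ j ∈ Finset.range (n + 1), n.choose j * f j) / n.factorial := by
  ext n
  rw [mul_comm, coeff_mul, Finset.Nat.sum_antidiagonal_eq_sum_range_succ_mk, coeff_mk,
    Finset.sum_div]
  refine Finset.sum_congr rfl fun j hj => ?_
  have hjn : j ≤ n := Finset.mem_range_succ_iff.mp hj
  have hfac : (n.choose j * j.factorial * (n - j).factorial : K) = n.factorial := by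
    exact_mod_cast Nat.choose_mul_factorial_mul_factorial hjn
  have hchoose : (n.choose j : K) ≠ 0 := by exact_mod_cast (Nat.choose_pos hjn).ne'
  simp only [coeff_mk, coeff_exp, map_div₀, map_one, map_natCast]
  rw [← hfac]
  field_simp

end PowerSeries

theorem polyBernoulli_eq_sum_range (k : ℤ) (α a : ℂ) {n N : ℕ} (hN : n < N) :
    polyBernoulli k α a n = (-1) ^ n * ∑ m ∈ Finset.range N,
      (-1) ^ m * (m.factorial : ℂ) * (stirling2 n m : ℂ) * (α * m + a) ^ (-k) := by
  rw [polyBernoulli, Finset.sum_subset (Finset.range_subset_range.mpr hN)]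
  intro m _ hm
  rw [Finset.mem_range, not_lt] at hm
  simp [stirling2_eq_stirlingSecond, Nat.stirlingSecond_eq_zero_of_lt (Nat.lt_of_succ_le hm)]

theorem sum_choose_mul_polyBernoulli_succ (k : ℤ) (α a : ℂ) (n : ℕ) :
    ∑ j ∈ Finset.range (n + 1), (n.choose j : ℂ) * polyBernoulli k α a (j + 1) =
      ∑ m ∈ Finset.Icc 1 (n + 1),
        (-1 : ℂ) ^ (n + m - 1) * (m.factorial : ℂ) * (stirling2 n (m - 1) : ℂ) *
          (α * m + a) ^ (-k) := by
  set c : ℕ → ℂ := fun m => (-1) ^ m * (m.factorial : ℂ) * (α * m + a) ^ (-k)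
  calc ∑ j ∈ Finset.range (n + 1), (n.choose j : ℂ) * polyBernoulli k α a (j + 1)
      = ∑ m ∈ Finset.range (n + 2), c m * ∑ j ∈ Finset.range (n + 1),
          -((-1) ^ j * n.choose j * (Nat.stirlingSecond (j + 1) m : ℂ)) := by
        simp_rw [Finset.mul_sum]
        rw [Finset.sum_comm]
        refine Finset.sum_congr rfl fun j hj => ?_
        rw [polyBernoulli_eq_sum_range k α a (Nat.add_lt_add_right (Finset.mem_range.mp hj) 1),
          Finset.mul_sum, Finset.mul_sum]
        refine Finset.sum_congr rfl fun m _ => ?_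
        simp only [c, stirling2_eq_stirlingSecond]
        ring
    _ = ∑ i ∈ Finset.range (n + 1), c (i + 1) * -((-1) ^ n * Nat.stirlingSecond n i) := by
        simp_rw [Finset.sum_range_succ' _ (n + 1), Finset.sum_neg_distrib,
          Nat.sum_range_neg_one_pow_mul_choose_mul_stirlingSecond_succ]
        simp
    _ = _ := by
        rw [← Finset.Ico_add_one_right_eq_Icc, Finset.sum_Ico_eq_sum_range]
        refine Finset.sum_congr rfl fun i _ => ?_
        rw [add_comm 1 i, Nat.add_sub_cancel, ← add_assoc, Nat.add_sub_cancel]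
        simp only [c, stirling2_eq_stirlingSecond]
        ring

theorem stmt12_general (α a : ℂ) (k : ℤ) :
    PowerSeries.exp ℂ *
        (PowerSeries.mk fun n => polyBernoulli k α a n / (n.factorial : ℂ)).derivativeFun =
      PowerSeries.mk fun n =>
        (∑ m ∈ Finset.Icc 1 (n + 1),
          (-1 : ℂ) ^ (n + m - 1) * (m.factorial : ℂ) * (stirling2 n (m - 1) : ℂ) *
            (α * m + a) ^ (-k)) / (n.factorial : ℂ) := by
  change PowerSeries.exp ℂ * d⁄dX ℂ _ = _
  simp_rw [PowerSeries.derivative_mk_div_factorial, PowerSeries.exp_mul_mk_div_factorial,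
    sum_choose_mul_polyBernoulli_succ]

theorem stmt12 (α a : ℂ) (hα : α ≠ 0) (ha : ∀ m : ℕ, α * m + a ≠ 0) (k : ℤ) :
    PowerSeries.exp ℂ *
        (PowerSeries.mk fun n => polyBernoulli k α a n / (n.factorial : ℂ)).derivativeFun =
      PowerSeries.mk fun n =>
        (∑ m ∈ Finset.Icc 1 (n + 1),
          (-1 : ℂ) ^ (n + m - 1) * (m.factorial : ℂ) * (stirling2 n (m - 1) : ℂ) *
            (α * m + a) ^ (-k)) / (n.factorial : ℂ) :=
  stmt12_general α a k
end
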